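/- For every positive integer n, the identity Σ_{w=1}^n 2^{n−w}·w·C(n,w)·C(w−1, ⌈w/2⌉−1) = (n/2)·C(2n,n) holds. Equivalently, the average of λ(x,y) over all pairs (x,y) ∈ X×X equals Λ_n = (n/2^{n+1})·C(2n,n). -/

import Mathlib

/-!
Double count `T = ∑_{x,y,u} |d(x,u) - d(y,u)|`. For fixed `u`, since `d(y,u) = n - d(y,ū)`,
`d(x,u) - d(y,u) = d((x,y),(u,ū)) - n` is a signed distance in the cube `{0,1}^{2n}`, so
`T = 2^n ∑_s C(2n,s) |s - n| = 2^n n C(2n,n)`; this is the average. For fixed `x, y` at distance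
`w`, only the `w` coordinates where they differ matter and `d(x,u) - d(y,u) = 2k - w`, `k` counting
those where `u` disagrees with `x`; hence `∑_u = 2^{n-w} ∑_k C(w,k) |w - 2k|
= 2^{n-w} · 2⌈w/2⌉ C(w,⌈w/2⌉)`. Comparing the two counts gives the binomial identity.
-/

open Finset

theorem sum_range_sub_two_mul_mul_choose {R : Type*} [CommRing R] (w t : ℕ) :
    ∑ k ∈ range t, ((w : R) - 2 * k) * w.choose k = t * w.choose t := by
  induction t with
  | zero => simp
  | succ t ih =>
    rw [sum_range_succ, ih]
    rcases le_or_gt t w with htw | htw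
    · have h : ((w.choose (t + 1) * (t + 1) : ℕ) : R) = (w.choose t * (w - t) : ℕ) := by
        rw [Nat.choose_succ_right_eq]
      push_cast [Nat.cast_sub htw] at h ⊢
      linear_combination -h
    · simp [Nat.choose_eq_zero_of_lt htw, Nat.choose_eq_zero_of_lt (Nat.lt_succ_of_lt htw)]

theorem sum_range_choose_mul_abs_sub_two_mul (w : ℕ) :
    ∑ k ∈ range (w + 1), (w.choose k : ℝ) * |(w : ℝ) - 2 * k|
      = 2 * ((w + 1) / 2 : ℕ) * w.choose ((w + 1) / 2) := by
  set m := (w + 1) / 2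
  have hm : m ≤ w + 1 := by omega
  have hlow : ∀ k ∈ range m,
      (w.choose k : ℝ) * |(w : ℝ) - 2 * k| = ((w : ℝ) - 2 * k) * w.choose k := by
    intro k hk
    have : (2 * k : ℝ) ≤ w := by exact_mod_cast (by simp at hk; omega : 2 * k ≤ w)
    rw [abs_of_nonneg (by linarith), mul_comm]
  have hhigh : ∀ k ∈ Ico m (w + 1),
      (w.choose k : ℝ) * |(w : ℝ) - 2 * k| = -(((w : ℝ) - 2 * k) * w.choose k) := by
    intro k hk
    have : (w : ℝ) ≤ 2 * k := by exact_mod_cast (by simp at hk; omega : w ≤ 2 * k)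
    rw [abs_of_nonpos (by linarith)]
    ring
  rw [← sum_range_add_sum_Ico _ hm, sum_congr rfl hlow, sum_congr rfl hhigh, sum_neg_distrib,
    sum_Ico_eq_sub _ hm, sum_range_sub_two_mul_mul_choose, sum_range_sub_two_mul_mul_choose,
    Nat.choose_succ_self]
  push_cast
  ring

theorem sum_range_choose_two_mul_mul_abs_sub (n : ℕ) :
    ∑ s ∈ range (2 * n + 1), ((2 * n).choose s : ℝ) * |(s : ℝ) - n|
      = n * (2 * n).choose n := by
  have h := sum_range_choose_mul_abs_sub_two_mul (2 * n)
  rw [show (2 * n + 1) / 2 = n by omega] at h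
  have hhalf (s : ℕ) : |(s : ℝ) - n| = |((2 * n : ℕ) : ℝ) - 2 * s| / 2 := by
    rw [abs_sub_comm, eq_div_iff two_ne_zero, ← abs_two, ← abs_mul, abs_two]
    push_cast
    ring_nf
  simp_rw [hhalf, mul_div_assoc', ← sum_div, h]
  ring

theorem succ_div_two_mul_choose (w : ℕ) :
    (w + 1) / 2 * w.choose ((w + 1) / 2) = w * (w - 1).choose ((w + 1) / 2 - 1) := by
  rcases w with _ | v
  · rfl
  · obtain ⟨t, ht⟩ : ∃ t, (v + 1 + 1) / 2 = t + 1 := ⟨v / 2, by omega⟩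
    rw [ht, Nat.add_sub_cancel, Nat.add_sub_cancel, Nat.add_one_mul_choose_eq, mul_comm]

section HammingCube

variable {ι : Type*} [Fintype ι]

theorem hammingDist_sub_hammingDist (x y u : ι → Bool) :
    (hammingDist x u : ℤ) - hammingDist y u
      = 2 * #{j ∈ {j | x j ≠ y j} | u j ≠ x j} - hammingDist x y := by
  simp only [hammingDist, filter_filter, natCast_card_filter, mul_sum, ← sum_sub_distrib]
  refine sum_congr rfl fun j _ => ?_
  cases x j <;> cases y j <;> cases u j <;> simp

theorem hammingDist_add_hammingDist_not (x u : ι → Bool) :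
    hammingDist x u + hammingDist x (fun j => !u j) = Fintype.card ι := by
  simp only [hammingDist, card_filter, ← sum_add_distrib]
  rw [Fintype.card_eq_sum_ones]
  refine sum_congr rfl fun j _ => ?_
  cases x j <;> cases u j <;> simp

theorem hammingDist_sumElim {κ : Type*} [Fintype κ] (x u : ι → Bool) (y v : κ → Bool) :
    hammingDist (Sum.elim x y) (Sum.elim u v) = hammingDist x u + hammingDist y v := by
  simp only [hammingDist, card_filter, Fintype.sum_sum_type, Sum.elim_inl, Sum.elim_inr]
  rfl

variable [DecidableEq ι]

theorem sum_hammingDist_eq {M : Type*} [AddCommMonoid M] (x : ι → Bool) (g : ℕ → M) :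
    ∑ u : ι → Bool, g (hammingDist u x)
      = ∑ k ∈ range (Fintype.card ι + 1), (Fintype.card ι).choose k • g k := by
  let e : (ι → Bool) ≃ Finset ι :=
    { toFun u := {j | u j ≠ x j}
      invFun s j := if j ∈ s then !x j else x j
      left_inv u := by funext j; cases hu : u j <;> cases hx : x j <;> simp [hu, hx]
      right_inv s := by ext j; by_cases j ∈ s <;> cases x j <;> simp [*] }
  calc ∑ u : ι → Bool, g (hammingDist u x) = ∑ u, g #(e u) := rfl
    _ = ∑ s ∈ (univ : Finset ι).powerset, g #s := by
      rw [powerset_univ]; exact e.sum_comp (g ·.card)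
    _ = _ := by rw [sum_powerset_apply_card, card_univ]

theorem sum_card_filter_ne_eq {M : Type*} [AddCommMonoid M] (D : Finset ι)
    (x : ι → Bool) (g : ℕ → M) :
    ∑ u : ι → Bool, g #{j ∈ D | u j ≠ x j}
      = 2 ^ (Fintype.card ι - #D) • ∑ k ∈ range (#D + 1), (#D).choose k • g k := by
  have hcard (u : ι → Bool) :
      #{j ∈ D | u j ≠ x j} = hammingDist (fun i : D => u i) (fun i : D => x i) := by
    simp only [hammingDist, card_filter, ← sum_coe_sort D]
  rw [Fintype.sum_equiv (Equiv.piEquivPiSubtypeProd (· ∈ D) fun _ => Bool) _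
      (fun p => g (hammingDist p.1 fun i : D => x i)) (fun u => by rw [hcard]; rfl),
    Fintype.sum_prod_type]
  simp only [sum_const, card_univ, Fintype.card_fun, Fintype.card_bool, ← smul_sum]
  rw [sum_hammingDist_eq, Fintype.card_coe, Fintype.card_subtype_compl, Fintype.card_coe]

theorem sum_sum_hammingDist_eq {M : Type*} [AddCommMonoid M] (g : ℕ → M) :
    ∑ x : ι → Bool, ∑ y : ι → Bool, g (hammingDist x y)
      = 2 ^ Fintype.card ι •
          ∑ k ∈ range (Fintype.card ι + 1), (Fintype.card ι).choose k • g k := by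
  have hx (x : ι → Bool) : ∑ y : ι → Bool, g (hammingDist x y)
      = ∑ k ∈ range (Fintype.card ι + 1), (Fintype.card ι).choose k • g k := by
    simp_rw [hammingDist_comm x]
    exact sum_hammingDist_eq x g
  simp only [hx, sum_const, card_univ, Fintype.card_fun, Fintype.card_bool]

theorem sum_abs_hammingDist_sub_hammingDist (x y : ι → Bool) :
    ∑ u : ι → Bool, |(hammingDist x u : ℝ) - hammingDist y u|
      = 2 ^ (Fintype.card ι - hammingDist x y) * (2 * ((hammingDist x y + 1) / 2 : ℕ)
          * (hammingDist x y).choose ((hammingDist x y + 1) / 2)) := by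
  have hw : hammingDist x y = #{j | x j ≠ y j} := rfl
  have habs (u : ι → Bool) : |(hammingDist x u : ℝ) - hammingDist y u|
      = |(hammingDist x y : ℝ) - 2 * #{j ∈ {j | x j ≠ y j} | u j ≠ x j}| := by
    rw [abs_sub_comm (hammingDist x y : ℝ)]
    exact_mod_cast congrArg (|·|) (hammingDist_sub_hammingDist x y u)
  simp_rw [habs]
  rw [sum_card_filter_ne_eq _ _ fun k => |(hammingDist x y : ℝ) - 2 * k|, ← hw,
    ← sum_range_choose_mul_abs_sub_two_mul]
  simp only [nsmul_eq_mul, Nat.cast_pow, Nat.cast_ofNat]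

theorem sum_sum_abs_hammingDist_sub_hammingDist (u : ι → Bool) :
    ∑ x : ι → Bool, ∑ y : ι → Bool, |(hammingDist x u : ℝ) - hammingDist y u|
      = Fintype.card ι * (2 * Fintype.card ι).choose (Fintype.card ι) := by
  have hsum (x y : ι → Bool) : |(hammingDist x u : ℝ) - hammingDist y u|
      = |(hammingDist (Sum.elim x y) (Sum.elim u fun j => !u j) : ℝ) - Fintype.card ι| := by
    rw [hammingDist_sumElim, ← hammingDist_add_hammingDist_not y u]
    push_cast
    ring_nf
  simp_rw [hsum]
  rw [← Fintype.sum_prod_type']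
  refine ((Equiv.sumArrowEquivProdArrow ι ι Bool).symm.sum_comp
    fun z => |(hammingDist z (Sum.elim u fun j => !u j) : ℝ) - Fintype.card ι|).trans ?_
  rw [sum_hammingDist_eq _ fun s => |(s : ℝ) - Fintype.card ι|, Fintype.card_sum, ← two_mul]
  simp only [nsmul_eq_mul]
  exact sum_range_choose_two_mul_mul_abs_sub _

theorem sum_sum_sum_abs_hammingDist_sub_hammingDist :
    ∑ x : ι → Bool, ∑ y : ι → Bool, ∑ u : ι → Bool,
        |(hammingDist x u : ℝ) - hammingDist y u|
      = 2 ^ Fintype.card ι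
          * (Fintype.card ι * (2 * Fintype.card ι).choose (Fintype.card ι)) := by
  rw [(sum_congr rfl fun x _ => sum_comm).trans sum_comm]
  simp only [sum_sum_abs_hammingDist_sub_hammingDist, sum_const, card_univ, Fintype.card_fun,
    Fintype.card_bool, nsmul_eq_mul]
  push_cast
  ring

theorem sum_sum_sum_abs_hammingDist_sub_hammingDist_eq_sum_range :
    ∑ x : ι → Bool, ∑ y : ι → Bool, ∑ u : ι → Bool,
        |(hammingDist x u : ℝ) - hammingDist y u|
      = 2 ^ (Fintype.card ι + 1) * ∑ w ∈ range (Fintype.card ι + 1),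
          (2 : ℝ) ^ (Fintype.card ι - w) * w * (Fintype.card ι).choose w
            * (w - 1).choose ((w + 1) / 2 - 1) := by
  simp only [sum_abs_hammingDist_sub_hammingDist]
  rw [sum_sum_hammingDist_eq fun w =>
    (2 : ℝ) ^ (Fintype.card ι - w) * (2 * ((w + 1) / 2 : ℕ) * w.choose ((w + 1) / 2))]
  simp only [nsmul_eq_mul, mul_sum, pow_succ]
  refine sum_congr rfl fun w _ => ?_
  have h := congrArg (Nat.cast (R := ℝ)) (succ_div_two_mul_choose w)
  push_cast at h ⊢
  linear_combination 2 ^ Fintype.card ι * 2 * 2 ^ (Fintype.card ι - w)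
    * ((Fintype.card ι).choose w : ℝ) * h

end HammingCube

theorem lambda_average_hamming (n : ℕ) :
    (∑ w ∈ Finset.Icc 1 n,
        (2 : ℝ) ^ (n - w) * w * Nat.choose n w * Nat.choose (w - 1) ((w + 1) / 2 - 1)
      = (n : ℝ) / 2 * Nat.choose (2 * n) n)
    ∧ ((2 : ℝ) ^ (2 * n))⁻¹ *
        ∑ x : Fin n → Bool, ∑ y : Fin n → Bool,
          ((1 : ℝ) / 2) * ∑ u : Fin n → Bool,
            |(hammingDist x u : ℝ) - (hammingDist y u : ℝ)|
      = (n : ℝ) / 2 ^ (n + 1) * Nat.choose (2 * n) n := by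
  have hcenter := sum_sum_sum_abs_hammingDist_sub_hammingDist (ι := Fin n)
  have hdist := sum_sum_sum_abs_hammingDist_sub_hammingDist_eq_sum_range (ι := Fin n)
  simp only [Fintype.card_fin] at hcenter hdist
  have hIcc : ∑ w ∈ Icc 1 n,
        (2 : ℝ) ^ (n - w) * w * n.choose w * (w - 1).choose ((w + 1) / 2 - 1)
      = ∑ w ∈ range (n + 1),
        (2 : ℝ) ^ (n - w) * w * n.choose w * (w - 1).choose ((w + 1) / 2 - 1) := by
    refine sum_subset (fun w hw => by simp at hw ⊢; omega) fun w hw hw' => ?_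
    obtain rfl : w = 0 := by simp at hw hw'; omega
    simp
  constructor
  · rw [hcenter, pow_succ, mul_assoc] at hdist
    rw [hIcc]
    linarith [mul_left_cancel₀ (by positivity) hdist]
  · simp only [← mul_sum]
    rw [hcenter, pow_succ, two_mul, pow_add]
    field_simp
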